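/- Let ≤_T be the graded order with X₂ > X₁. Let 2 ≤ t ≤ 4 with t ≤ ⌊r₁/2⌋ and t ≤ ⌊r₂/2⌋, let e ∈ 𝔽(r₁,r₂) with ω(e) ≤ t, let τ ∈ 𝓘, and let U be the syndrome table afforded by τ and e. Let l = (l₁,l₂) ∈ 𝔉 with l₁ ≠ 0 and l₂ = 1. Let F = {f^(1), f^(2)} be a minimal set of polynomials for u^l with defining points s^(1), s^(2) satisfying s^(1)_1 = t and s^(2)_2 = 1, and let (g, k₁) be an auxiliary polynomial for index 1 with v₁ = g[U]_{k₁} ≠ 0. Then there exists b ∈ L such that the polynomial h_b = f^(2) − (b/v₁)·g generates u^l and satisfies h_b[U]_k = 0 for every k ∈ B(2t+1) with l ≤_T k. -/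

import Mathlib

/-! The error has at most `t` nonzero positions `p`, so `U` is a sum of at most `t` terms
`n ↦ c_p x_p^{n₁} y_p^{n₂}` and `f[U]_n = ∑_p c_p f(x_p, y_p) x_p^{n₁-s₁} y_p^{n₂-s₂}`.
Minimality forces the `x_p` to be `t` distinct values: otherwise `∏ (X₁ - x_p)`, of degree
`< t`, would be a generator with leading exponent in the footprint. Along the row of `l`,
`f⁽²⁾` and `g` then impose the same `t - 1` Vandermonde conditions on the vectors
`(c_p f⁽²⁾(x_p, y_p))_p` and `(c_p g(x_p, y_p))_p`; their solution space is a line, and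
`v₁ ≠ 0` makes the second vector nonzero, so the two are proportional. For the matching
`b`, `h_b` vanishes at every error location and therefore annihilates all of `U`. -/

/-- A monomial order on ℕ × ℕ: a linear order compatible with addition
for which (0,0) is the least element. -/
structure MonOrd where
  le : ℕ × ℕ → ℕ × ℕ → Prop
  refl : ∀ a, le a a
  trans : ∀ a b c, le a b → le b c → le a c
  antisymm : ∀ a b, le a b → le b a → a = b
  total : ∀ a b, le a b ∨ le b a
  add_right : ∀ a b c, le a b → le (a + c) (b + c)
  zero_le : ∀ a, le (0, 0) a

/-- Strict version of a monomial order. -/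
def MonOrd.lt (T : MonOrd) (a b : ℕ × ℕ) : Prop := T.le a b ∧ a ≠ b

/-- `s` is the leading power product exponent of `f` w.r.t. `T`. -/
def IsLP {L : Type} [Field L] (T : MonOrd) (f : (ℕ × ℕ) →₀ L) (s : ℕ × ℕ) : Prop :=
  s ∈ f.support ∧ ∀ m ∈ f.support, T.le m s

/-- `f[U]_n`, computed with respect to a given leading exponent `s` of `f`. -/
noncomputable def fApp {L : Type} [Field L] (U : ℕ × ℕ → L) (f : (ℕ × ℕ) →₀ L)
    (s n : ℕ × ℕ) : L :=
  if s.1 ≤ n.1 ∧ s.2 ≤ n.2 then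
    ∑ m ∈ f.support, f m * U (m.1 + n.1 - s.1, m.2 + n.2 - s.2)
  else 0

/-- `f` generates the doubly periodic array `U`. -/
def GeneratesU {L : Type} [Field L] (T : MonOrd) (U : ℕ × ℕ → L) (f : (ℕ × ℕ) →₀ L) : Prop :=
  ∃ s, IsLP T f s ∧ ∀ n, fApp U f s n = 0

/-- `f` generates the finite subarray `u^l` of `U`. -/
def GeneratesUpTo {L : Type} [Field L] (T : MonOrd) (U : ℕ × ℕ → L) (l : ℕ × ℕ)
    (f : (ℕ × ℕ) →₀ L) : Prop :=
  ∃ s, IsLP T f s ∧ ∀ k, s.1 ≤ k.1 → s.2 ≤ k.2 → T.lt k l → fApp U f s k = 0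

/-- `U` is a doubly periodic array of period r₁ × r₂. -/
def DoublyPeriodic {L : Type} (r₁ r₂ : ℕ) (U : ℕ × ℕ → L) : Prop :=
  ∀ n m : ℕ × ℕ, n.1 % r₁ = m.1 % r₁ → n.2 % r₂ = m.2 % r₂ → U n = U m

/-- Evaluation of a bivariate polynomial at a point `(x, y)`. -/
noncomputable def polyEval {L : Type} [Field L] (f : (ℕ × ℕ) →₀ L) (x y : L) : L :=
  ∑ m ∈ f.support, f m * x ^ m.1 * y ^ m.2

/-- The syndrome table afforded by `τ` and `e`:  `u_n = e(α^(τ+n))`. -/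
noncomputable def synTable {F L : Type} [Field F] [Field L] [Algebra F L] {r₁ r₂ : ℕ}
    (α₁ α₂ : L) (τ : Fin r₁ × Fin r₂) (e : Fin r₁ × Fin r₂ → F) : ℕ × ℕ → L :=
  fun n => ∑ p : Fin r₁ × Fin r₂,
    algebraMap F L (e p) * (α₁ ^ ((τ.1 : ℕ) + n.1)) ^ (p.1 : ℕ)
      * (α₂ ^ ((τ.2 : ℕ) + n.2)) ^ (p.2 : ℕ)

/-- The weight ω(e): number of nonzero coefficients. -/
noncomputable def wt {F : Type} [Field F] {r₁ r₂ : ℕ} (e : Fin r₁ × Fin r₂ → F) : ℕ :=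
  {p | e p ≠ 0}.ncard

/-- The hyperbolic set B(δ) of amplitude δ inside {0,…,r₁−1} × {0,…,r₂−1}. -/
def hypB (r₁ r₂ δ : ℕ) : Set (ℕ × ℕ) :=
  {l | l.1 < r₁ ∧ l.2 < r₂ ∧ (l.1 + 1) * (l.2 + 1) ≤ δ ∧ l ≠ (δ - 1, 0) ∧ l ≠ (0, δ - 1)}

/-- The border set 𝔉 = {l ∈ B(2t+1) : 2t ≤ (l₁+1)(l₂+1)}. -/
def frontF (r₁ r₂ t : ℕ) : Set (ℕ × ℕ) :=
  {l ∈ hypB r₁ r₂ (2 * t + 1) | 2 * t ≤ (l.1 + 1) * (l.2 + 1)}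

/-- The lexicographic order with X₁ > X₂. -/
def lexMonOrd : MonOrd where
  le a b := a.1 < b.1 ∨ (a.1 = b.1 ∧ a.2 ≤ b.2)
  refl a := by omega
  trans a b c h1 h2 := by omega
  antisymm a b h1 h2 := by
    obtain ⟨a1, a2⟩ := a; obtain ⟨b1, b2⟩ := b
    simp_all only [Prod.mk.injEq]; omega
  total a b := by omega
  add_right a b c h := by
    obtain ⟨a1, a2⟩ := a; obtain ⟨b1, b2⟩ := b; obtain ⟨c1, c2⟩ := c
    simp_all only [Prod.mk_add_mk]; omega
  zero_le a := by
    obtain ⟨a1, a2⟩ := a; simp only []; omega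

/-- The (reverse) graded order with X₂ > X₁. -/
def grMonOrd : MonOrd where
  le a b := a.1 + a.2 < b.1 + b.2 ∨ (a.1 + a.2 = b.1 + b.2 ∧ a.2 ≤ b.2)
  refl a := by omega
  trans a b c h1 h2 := by omega
  antisymm a b h1 h2 := by
    obtain ⟨a1, a2⟩ := a; obtain ⟨b1, b2⟩ := b
    simp_all only [Prod.mk.injEq]; omega
  total a b := by omega
  add_right a b c h := by
    obtain ⟨a1, a2⟩ := a; obtain ⟨b1, b2⟩ := b; obtain ⟨c1, c2⟩ := c
    simp_all only [Prod.mk_add_mk]; omega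
  zero_le a := by
    obtain ⟨a1, a2⟩ := a; simp only []; omega

/-- The ideal (X₁^{r₁} − 1, X₂^{r₂} − 1) of L[X₁,X₂]. -/
noncomputable def periodIdeal (L : Type) [Field L] (r₁ r₂ : ℕ) :
    Ideal (AddMonoidAlgebra L (ℕ × ℕ)) :=
  Ideal.span {AddMonoidAlgebra.single (r₁, 0) 1 - 1, AddMonoidAlgebra.single (0, r₂) 1 - 1}

namespace MonOrd

variable (T : MonOrd)

theorem le_self_add (a c : ℕ × ℕ) : T.le a (a + c) := by
  have h := T.add_right 0 c a (T.zero_le c)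
  rwa [zero_add, add_comm] at h

theorem lt_self_add (a : ℕ × ℕ) {c : ℕ × ℕ} (hc : c ≠ 0) : T.lt a (a + c) :=
  ⟨T.le_self_add a c, fun h => hc (by simpa using h)⟩

theorem lt_of_add_lt_add_right {a b c : ℕ × ℕ} (h : T.lt (a + c) (b + c)) : T.lt a b := by
  refine ⟨(T.total a b).resolve_right fun hba => h.2 ?_, fun hab => h.2 (by rw [hab])⟩
  exact T.antisymm _ _ h.1 (T.add_right b a c hba)

end MonOrd

theorem IsLP.sub_smul {L : Type} [Field L] {T : MonOrd} {f g : (ℕ × ℕ) →₀ L} {s sg : ℕ × ℕ}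
    (hf : IsLP T f s) (hg : IsLP T g sg) (hlt : T.lt sg s) (μ : L) :
    IsLP T (f - μ • g) s := by
  have hgs : g s = 0 := by
    by_contra hne
    exact hlt.2 (T.antisymm _ _ hlt.1 (hg.2 s (Finsupp.mem_support_iff.mpr hne)))
  refine ⟨by simpa [hgs] using hf.1, fun m hm => ?_⟩
  rcases Finset.mem_union.mp (Finsupp.support_sub hm) with hm | hm
  · exact hf.2 m hm
  · exact T.trans _ _ _ (hg.2 m (Finsupp.support_smul hm)) hlt.1

theorem le_of_fApp_ne_zero {L : Type} [Field L] {U : ℕ × ℕ → L} {f : (ℕ × ℕ) →₀ L}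
    {s n : ℕ × ℕ} (h : fApp U f s n ≠ 0) : s.1 ≤ n.1 ∧ s.2 ≤ n.2 := by
  by_contra hsn
  exact h (if_neg hsn)

theorem fApp_row_eq_zero {L : Type} [Field L] {T : MonOrd} {U : ℕ × ℕ → L}
    {f : (ℕ × ℕ) →₀ L} {s l : ℕ × ℕ} {a : ℕ}
    (hgen : ∀ k : ℕ × ℕ, s.1 ≤ k.1 → s.2 ≤ k.2 → T.lt k l → fApp U f s k = 0)
    (hl : l = (s.1 + a, s.2)) {j : ℕ} (hj : j < a) : fApp U f s (s.1 + j, s.2) = 0 := by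
  refine hgen _ (by simp) le_rfl ?_
  have hsplit : l = (s.1 + j, s.2) + (a - j, 0) := by
    subst hl; ext <;> simp; omega
  exact hsplit ▸ T.lt_self_add _ (by simp; omega)

theorem eq_of_mem_frontF_of_snd_eq_one {r₁ r₂ t : ℕ} {l : ℕ × ℕ} (hl : l ∈ frontF r₁ r₂ t)
    (hl2 : l.2 = 1) : l = (t - 1, 1) := by
  obtain ⟨⟨-, -, hlB, -, -⟩, hlF⟩ := hl
  rw [hl2] at hlB hlF
  ext <;> simp <;> omega

section Vandermonde

variable {K ι : Type*} [Field K] {S : Finset ι} {x : ι → K}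

theorem eq_zero_of_sum_mul_pow_eq_zero (hx : Set.InjOn x S) {z : ι → K}
    (hz : ∀ j < S.card, ∑ p ∈ S, z p * x p ^ j = 0) : ∀ p ∈ S, z p = 0 := by
  set E := S.equivFin
  have hzero := Matrix.eq_zero_of_forall_pow_sum_mul_pow_eq_zero
    (f := fun i => x (E.symm i)) (v := fun i => z (E.symm i))
    (fun i j hij => E.symm.injective (Subtype.ext (hx (E.symm i).2 (E.symm j).2 hij)))
    (fun i => by
      rw [← hz i i.2, ← S.sum_coe_sort]
      exact E.symm.sum_comp fun p : S => z p * x p ^ (i : ℕ))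
  intro p hp
  simpa [E] using congrFun hzero (E ⟨p, hp⟩)

theorem exists_eq_mul_of_sum_mul_pow_eq_zero [DecidableEq ι] (hx : Set.InjOn x S)
    {z w : ι → K} (hz : ∀ j < S.card - 1, ∑ p ∈ S, z p * x p ^ j = 0)
    (hw : ∀ j < S.card - 1, ∑ p ∈ S, w p * x p ^ j = 0) (hw0 : ∃ p ∈ S, w p ≠ 0) :
    ∃ μ, ∀ p ∈ S, z p = μ * w p := by
  obtain ⟨p₀, hp₀, hwp₀⟩ := hw0
  refine ⟨z p₀ / w p₀, fun p hp => sub_eq_zero.mp ?_⟩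
  have hy₀ : z p₀ - z p₀ / w p₀ * w p₀ = 0 := by field_simp; ring
  rcases eq_or_ne p p₀ with rfl | hne
  · exact hy₀
  refine eq_zero_of_sum_mul_pow_eq_zero (z := fun p => z p - z p₀ / w p₀ * w p)
    (hx.mono (S.erase_subset p₀))
    (fun j hj => ?_) p (Finset.mem_erase.mpr ⟨hne, hp⟩)
  rw [Finset.card_erase_of_mem hp₀] at hj
  rw [Finset.sum_erase _ (by rw [hy₀, zero_mul])]
  simp_rw [sub_mul, Finset.sum_sub_distrib, mul_assoc, ← Finset.mul_sum, hz j hj, hw j hj,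
    mul_zero, sub_zero]

end Vandermonde

section PowerSum

variable {L : Type} [Field L] {ι : Type*}

theorem polyEval_sub_smul (f g : (ℕ × ℕ) →₀ L) (μ x y : L) :
    polyEval (f - μ • g) x y = polyEval f x y - μ * polyEval g x y := by
  show (f - μ • g).sum (fun m a => a * x ^ m.1 * y ^ m.2) =
    f.sum (fun m a => a * x ^ m.1 * y ^ m.2) - μ * g.sum (fun m a => a * x ^ m.1 * y ^ m.2)
  rw [Finsupp.sum_sub_index (fun _ _ _ => by ring), Finsupp.sum_smul_index (fun _ => by ring),
    Finsupp.mul_sum]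
  simp only [mul_assoc]

def powerSumTable (S : Finset ι) (c x y : ι → L) (n : ℕ × ℕ) : L :=
  ∑ p ∈ S, c p * x p ^ n.1 * y p ^ n.2

variable (S : Finset ι) (c x y : ι → L)

theorem fApp_powerSumTable (f : (ℕ × ℕ) →₀ L) {s n : ℕ × ℕ} (hsn : s.1 ≤ n.1 ∧ s.2 ≤ n.2) :
    fApp (powerSumTable S c x y) f s n =
      ∑ p ∈ S, c p * polyEval f (x p) (y p) * (x p ^ (n.1 - s.1) * y p ^ (n.2 - s.2)) := by
  simp only [fApp, if_pos hsn, powerSumTable, polyEval, Finset.mul_sum, Finset.sum_mul]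
  rw [Finset.sum_comm]
  refine Finset.sum_congr rfl fun p _ => Finset.sum_congr rfl fun m _ => ?_
  rw [Nat.add_sub_assoc hsn.1, Nat.add_sub_assoc hsn.2, pow_add, pow_add]
  ring

theorem fApp_powerSumTable_row (f : (ℕ × ℕ) →₀ L) (s : ℕ × ℕ) (j : ℕ) :
    fApp (powerSumTable S c x y) f s (s.1 + j, s.2) =
      ∑ p ∈ S, c p * polyEval f (x p) (y p) * x p ^ j := by
  rw [fApp_powerSumTable S c x y f (s := s) (n := (s.1 + j, s.2)) ⟨Nat.le_add_right _ _, le_rfl⟩]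
  simp

theorem sum_mul_pow_eq_zero_of_generates {T : MonOrd} {f : (ℕ × ℕ) →₀ L} {s l : ℕ × ℕ} {a : ℕ}
    (hgen : ∀ k : ℕ × ℕ, s.1 ≤ k.1 → s.2 ≤ k.2 → T.lt k l →
      fApp (powerSumTable S c x y) f s k = 0)
    (hl : l = (s.1 + a, s.2)) : ∀ j < a, ∑ p ∈ S, c p * polyEval f (x p) (y p) * x p ^ j = 0 :=
  fun j hj => fApp_powerSumTable_row S c x y f s j ▸ fApp_row_eq_zero hgen hl hj

theorem fApp_powerSumTable_eq_zero {f : (ℕ × ℕ) →₀ L}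
    (hf : ∀ p ∈ S, c p * polyEval f (x p) (y p) = 0) (s n : ℕ × ℕ) :
    fApp (powerSumTable S c x y) f s n = 0 := by
  by_cases hsn : s.1 ≤ n.1 ∧ s.2 ≤ n.2
  · rw [fApp_powerSumTable S c x y f hsn]
    exact Finset.sum_eq_zero fun p hp => by rw [hf p hp, zero_mul]
  · exact if_neg hsn

theorem synTable_eq_powerSumTable {F : Type} [Field F] [Algebra F L] {r₁ r₂ : ℕ}
    (α₁ α₂ : L) (τ : Fin r₁ × Fin r₂) (e : Fin r₁ × Fin r₂ → F) [DecidablePred (e · ≠ 0)] :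
    synTable α₁ α₂ τ e = powerSumTable {p | e p ≠ 0}
      (fun p => algebraMap F L (e p) * (α₁ ^ (p.1 : ℕ)) ^ (τ.1 : ℕ) * (α₂ ^ (p.2 : ℕ)) ^ (τ.2 : ℕ))
      (fun p => α₁ ^ (p.1 : ℕ)) (fun p => α₂ ^ (p.2 : ℕ)) := by
  ext n
  rw [synTable, powerSumTable,
    Finset.sum_filter_of_ne (p := fun p => e p ≠ 0) fun p _ hp he => hp (by simp [he])]
  refine Finset.sum_congr rfl fun p _ => ?_
  ring

end PowerSum

theorem wt_eq_card_filter {F : Type} [Field F] {r₁ r₂ : ℕ} (e : Fin r₁ × Fin r₂ → F)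
    [DecidablePred (e · ≠ 0)] : wt e = ({p | e p ≠ 0} : Finset (Fin r₁ × Fin r₂)).card := by
  rw [wt, ← Set.ncard_coe_finset, Finset.coe_filter]
  simp

section Locator

variable {L : Type} [Field L]

open Polynomial

noncomputable def ofPolynomialX₁ (P : L[X]) : (ℕ × ℕ) →₀ L :=
  Finsupp.embDomain (Function.Embedding.sectL ℕ 0) P.toFinsupp.coeff

theorem support_ofPolynomialX₁ (P : L[X]) :
    (ofPolynomialX₁ P).support = P.support.map (Function.Embedding.sectL ℕ 0) :=
  Finsupp.support_embDomain _ _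

theorem ofPolynomialX₁_apply (P : L[X]) (j : ℕ) : ofPolynomialX₁ P (j, 0) = P.coeff j :=
  Finsupp.embDomain_apply_self _ _ j

theorem polyEval_ofPolynomialX₁ (P : L[X]) (x y : L) :
    polyEval (ofPolynomialX₁ P) x y = P.eval x := by
  rw [polyEval, support_ofPolynomialX₁, Finset.sum_map, eval_eq_sum, Polynomial.sum_def]
  refine Finset.sum_congr rfl fun j _ => ?_
  simp [ofPolynomialX₁_apply]

theorem isLP_ofPolynomialX₁ (T : MonOrd) {P : L[X]} (hP : P.Monic) :
    IsLP T (ofPolynomialX₁ P) (P.natDegree, 0) := by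
  simp only [IsLP, support_ofPolynomialX₁, Finset.mem_map, Function.Embedding.sectL_apply,
    forall_exists_index, and_imp]
  refine ⟨⟨P.natDegree, by simp [hP.ne_zero], rfl⟩, fun m j hj hjm => ?_⟩
  have hsplit : (P.natDegree, 0) = (j, 0) + (P.natDegree - j, 0) := by
    have := le_natDegree_of_mem_supp j hj
    ext <;> simp; omega
  exact hjm ▸ hsplit ▸ T.le_self_add _ _

theorem le_card_image_of_forall_fApp_ne_zero (T : MonOrd) {ι : Type*} [DecidableEq L]
    {S : Finset ι} {c x y : ι → L} {a : ℕ}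
    (hmin : ∀ (g : (ℕ × ℕ) →₀ L) (a' : ℕ), IsLP T g (a', 0) → a' < a →
      ∃ k, fApp (powerSumTable S c x y) g (a', 0) k ≠ 0) :
    a ≤ (S.image x).card := by
  by_contra! hlt
  -- the locator polynomial of the `x`-coordinates of `S` would generate the whole table
  set P : L[X] := ∏ u ∈ S.image x, (X - C u)
  have hP : P.Monic := monic_prod_of_monic _ _ fun u _ => monic_X_sub_C u
  have hdeg : P.natDegree = (S.image x).card := natDegree_finsetProd_X_sub_C_eq_card _ id
  obtain ⟨k, hk⟩ := hmin _ _ (isLP_ofPolynomialX₁ T hP) (hdeg ▸ hlt)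
  refine hk (fApp_powerSumTable_eq_zero S c x y (fun p hp => ?_) _ k)
  rw [polyEval_ofPolynomialX₁, eval_prod,
    Finset.prod_eq_zero (Finset.mem_image_of_mem x hp) (by simp), mul_zero]

theorem injOn_of_forall_fApp_ne_zero (T : MonOrd) {ι : Type*} {S : Finset ι} {c x y : ι → L}
    {a : ℕ} (hS : S.card ≤ a)
    (hmin : ∀ (g : (ℕ × ℕ) →₀ L) (a' : ℕ), IsLP T g (a', 0) → a' < a →
      ∃ k, fApp (powerSumTable S c x y) g (a', 0) k ≠ 0) :
    Set.InjOn x S ∧ S.card = a := by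
  classical
  have hle := le_card_image_of_forall_fApp_ne_zero T hmin
  have hcard := S.card_image_le (f := x)
  exact ⟨Finset.card_image_iff.mp (by omega), by omega⟩

end Locator

theorem exceptional_case_graded_general
    (F : Type) [Field F]
    (L : Type) [Field L] [Algebra F L]
    (r₁ r₂ : ℕ)
    (α₁ α₂ : L)
    (t : ℕ)
    (e : Fin r₁ × Fin r₂ → F) (hω : wt e ≤ t) (τ : Fin r₁ × Fin r₂)
    (U : ℕ × ℕ → L) (hU : U = synTable α₁ α₂ τ e)
    (l : ℕ × ℕ) (hl : l ∈ frontF r₁ r₂ t) (hl2 : l.2 = 1)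
    (f₂ : (ℕ × ℕ) →₀ L) (s₁ s₂ : ℕ × ℕ)
    (hLP2 : IsLP grMonOrd f₂ s₂)
    (hstair1 : s₂.1 = 0)
    (hs1 : s₁.1 = t) (hs2 : s₂.2 = 1)
    (hgen2 : ∀ k : ℕ × ℕ, s₂.1 ≤ k.1 → s₂.2 ≤ k.2 → grMonOrd.lt k l → fApp U f₂ s₂ k = 0)
    (hmin : ∀ (g : (ℕ × ℕ) →₀ L) (sg : ℕ × ℕ), IsLP grMonOrd g sg →
      sg.1 ≤ s₁.1 - 1 → sg.2 ≤ s₂.2 - 1 →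
      ∃ k : ℕ × ℕ, sg.1 ≤ k.1 ∧ sg.2 ≤ k.2 ∧ grMonOrd.lt k l ∧ fApp U g sg k ≠ 0)
    (g : (ℕ × ℕ) →₀ L) (sg k₁ : ℕ × ℕ) (hgLP : IsLP grMonOrd g sg)
    (hk₁l : grMonOrd.lt k₁ l)
    (hgpast : ∀ m : ℕ × ℕ, sg.1 ≤ m.1 → sg.2 ≤ m.2 → grMonOrd.lt m k₁ → fApp U g sg m = 0)
    (hk₁LP : (k₁.1 - sg.1, k₁.2 - sg.2) = (s₁.1 - 1, s₂.2 - 1))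
    (v₁ : L) (hv₁ : fApp U g sg k₁ = v₁) (hv₁0 : v₁ ≠ 0) :
    ∃ b : L, ∃ sh : ℕ × ℕ,
      IsLP grMonOrd (f₂ - (b / v₁) • g) sh ∧
      (∀ k : ℕ × ℕ, sh.1 ≤ k.1 → sh.2 ≤ k.2 → grMonOrd.lt k l →
        fApp U (f₂ - (b / v₁) • g) sh k = 0) ∧
      (∀ k ∈ hypB r₁ r₂ (2 * t + 1), grMonOrd.le l k →
        fApp U (f₂ - (b / v₁) • g) sh k = 0) := by
  classical
  obtain rfl : s₂ = (0, 1) := Prod.ext hstair1 hs2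
  obtain rfl := eq_of_mem_frontF_of_snd_eq_one hl hl2
  obtain ⟨S, c, x, y, hS, rfl⟩ : ∃ S c x y, S.card ≤ t ∧ U = powerSumTable S c x y :=
    ⟨_, _, _, _, wt_eq_card_filter e ▸ hω, hU.trans (synTable_eq_powerSumTable α₁ α₂ τ e)⟩
  obtain ⟨hx, rfl⟩ := injOn_of_forall_fApp_ne_zero grMonOrd hS fun g' a hg ha => by
    obtain ⟨k, -, -, -, hk⟩ := hmin g' (a, 0) hg (by omega) (by simp)
    exact ⟨k, hk⟩
  have hk₁ : k₁ = (sg.1 + (S.card - 1), sg.2) := by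
    have := le_of_fApp_ne_zero (hv₁ ▸ hv₁0)
    simp only [Prod.mk.injEq] at hk₁LP
    ext <;> simp <;> omega
  have hsg : grMonOrd.lt sg (0, 1) := grMonOrd.lt_of_add_lt_add_right (c := (S.card - 1, 0))
    (by convert hk₁l using 1 <;> ext <;> simp [hk₁])
  obtain ⟨μ, hμ⟩ := exists_eq_mul_of_sum_mul_pow_eq_zero hx
    (sum_mul_pow_eq_zero_of_generates S c x y hgen2 (by simp))
    (sum_mul_pow_eq_zero_of_generates S c x y hgpast hk₁)
    (by
      rw [hk₁, fApp_powerSumTable_row] at hv₁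
      obtain ⟨p, hp, hne⟩ := Finset.exists_ne_zero_of_sum_ne_zero (hv₁ ▸ hv₁0)
      exact ⟨p, hp, left_ne_zero_of_mul hne⟩)
  have hvan := fApp_powerSumTable_eq_zero S c x y (f := f₂ - μ • g)
    (fun p hp => by rw [polyEval_sub_smul]; linear_combination hμ p hp) (0, 1)
  refine ⟨μ * v₁, (0, 1), ?_⟩
  rw [mul_div_cancel_right₀ μ hv₁0]
  exact ⟨hLP2.sub_smul hgLP hsg μ, fun k _ _ _ => hvan k, fun k _ _ => hvan k⟩

/-- graded order, X₂ > X₁; exceptional case d = 2, s⁽¹⁾₁ = t,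
s⁽²⁾₂ = 1 = l₂: existence of b ∈ L such that h_b = f⁽²⁾ − (b/v₁)·g generates u^l and
kills all later points of B(2t+1). -/
theorem exceptional_case_graded
    (q : ℕ) (hq : IsPrimePow q)
    (F : Type) [Field F] [Fintype F] (hF : Fintype.card F = q)
    (L : Type) [Field L] [Algebra F L]
    (r₁ r₂ : ℕ) (hr₁ : 0 < r₁) (hr₂ : 0 < r₂) (hco : Nat.Coprime q (r₁ * r₂))
    (α₁ α₂ : L) (hα₁ : IsPrimitiveRoot α₁ r₁) (hα₂ : IsPrimitiveRoot α₂ r₂)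
    (t : ℕ) (ht2 : 2 ≤ t) (ht4 : t ≤ 4) (htr1 : t ≤ r₁ / 2) (htr2 : t ≤ r₂ / 2)
    (e : Fin r₁ × Fin r₂ → F) (hω : wt e ≤ t) (τ : Fin r₁ × Fin r₂)
    (U : ℕ × ℕ → L) (hU : U = synTable α₁ α₂ τ e)
    (l : ℕ × ℕ) (hl : l ∈ frontF r₁ r₂ t) (hl1 : l.1 ≠ 0) (hl2 : l.2 = 1)
    (f₁ f₂ : (ℕ × ℕ) →₀ L) (s₁ s₂ : ℕ × ℕ)
    (hLP1 : IsLP grMonOrd f₁ s₁) (hLP2 : IsLP grMonOrd f₂ s₂)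
    (hstair1 : s₂.1 = 0) (hstair2 : s₁.2 = 0)
    (hstair3 : s₂.1 < s₁.1) (hstair4 : s₁.2 < s₂.2)
    (hs1 : s₁.1 = t) (hs2 : s₂.2 = 1)
    (hgen1 : ∀ k : ℕ × ℕ, s₁.1 ≤ k.1 → s₁.2 ≤ k.2 → grMonOrd.lt k l → fApp U f₁ s₁ k = 0)
    (hgen2 : ∀ k : ℕ × ℕ, s₂.1 ≤ k.1 → s₂.2 ≤ k.2 → grMonOrd.lt k l → fApp U f₂ s₂ k = 0)
    (hmin : ∀ (g : (ℕ × ℕ) →₀ L) (sg : ℕ × ℕ), IsLP grMonOrd g sg →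
      sg.1 ≤ s₁.1 - 1 → sg.2 ≤ s₂.2 - 1 →
      ∃ k : ℕ × ℕ, sg.1 ≤ k.1 ∧ sg.2 ≤ k.2 ∧ grMonOrd.lt k l ∧ fApp U g sg k ≠ 0)
    (g : (ℕ × ℕ) →₀ L) (sg k₁ : ℕ × ℕ) (hgLP : IsLP grMonOrd g sg)
    (hk₁l : grMonOrd.lt k₁ l)
    (hgpast : ∀ m : ℕ × ℕ, sg.1 ≤ m.1 → sg.2 ≤ m.2 → grMonOrd.lt m k₁ → fApp U g sg m = 0)
    (hk₁LP : (k₁.1 - sg.1, k₁.2 - sg.2) = (s₁.1 - 1, s₂.2 - 1))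
    (v₁ : L) (hv₁ : fApp U g sg k₁ = v₁) (hv₁0 : v₁ ≠ 0) :
    ∃ b : L, ∃ sh : ℕ × ℕ,
      IsLP grMonOrd (f₂ - (b / v₁) • g) sh ∧
      (∀ k : ℕ × ℕ, sh.1 ≤ k.1 → sh.2 ≤ k.2 → grMonOrd.lt k l →
        fApp U (f₂ - (b / v₁) • g) sh k = 0) ∧
      (∀ k ∈ hypB r₁ r₂ (2 * t + 1), grMonOrd.le l k →
        fApp U (f₂ - (b / v₁) • g) sh k = 0) :=
  exceptional_case_graded_general F L r₁ r₂ α₁ α₂ t e hω τ U hU l hl hl2 f₂ s₁ s₂ hLP2 hstair1 hs1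
    hs2 hgen2 hmin g sg k₁ hgLP hk₁l hgpast hk₁LP v₁ hv₁ hv₁0
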